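/- Let G be a subgroup of Sym(Ω) and let x ∈ Sym(Ω). Then (f_L, f_R) is a refiner for the right coset Gx if and only if (f_L, f_L) is a refiner for the group G and f_R(S) = (f_L(S^{x⁻¹}))^x for all stacks S of labelled digraphs on Ω. -/

import Mathlib

/-- A labelled digraph on vertex set `Ω` with labels in `L`:
`vlabel` gives the label of each vertex, and `alabel p = some l` means
`p` is an arc with label `l`, while `alabel p = none` means `p` is not an arc. -/
structure LDigraph (Ω L : Type*) where
  vlabel : Ω → L
  alabel : Ω × Ω → Option L

namespace LDigraph

/-- The image `Γ^g` of a labelled digraph under a permutation `g`. -/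
def map {Ω L : Type*} (g : Equiv.Perm Ω) (Γ : LDigraph Ω L) : LDigraph Ω L where
  vlabel := fun δ => Γ.vlabel (g⁻¹ δ)
  alabel := fun p => Γ.alabel (g⁻¹ p.1, g⁻¹ p.2)

end LDigraph

/-- A stack of labelled digraphs is a finite list of labelled digraphs. -/
abbrev Stack (Ω L : Type*) := List (LDigraph Ω L)

/-- The entrywise action `S^g` of a permutation on a stack. -/
def stackMap {Ω L : Type*} (g : Equiv.Perm Ω) (S : Stack Ω L) : Stack Ω L :=
  S.map (LDigraph.map g)

/-- `Iso S T` is the set of permutations inducing an isomorphism from `S` to `T`. -/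
def Iso {Ω L : Type*} (S T : Stack Ω L) : Set (Equiv.Perm Ω) :=
  {g | stackMap g S = T}

/-- `Auto S = Iso S S` is the set of permutations inducing automorphisms of `S`. -/
def Auto {Ω L : Type*} (S : Stack Ω L) : Set (Equiv.Perm Ω) := Iso S S

/-- A refiner for `V`: for all stacks `S`, `T` and all `g ∈ V`,
if `S^g = T` then `fL(S)^g = fR(T)`. -/
def IsRefiner {Ω L : Type*} (V : Set (Equiv.Perm Ω))
    (fL fR : Stack Ω L → Stack Ω L) : Prop :=
  ∀ (S T : Stack Ω L) (g : Equiv.Perm Ω), g ∈ V →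
    stackMap g S = T → stackMap g (fL S) = fR T

section StackAction

variable {Ω L : Type*}

@[simp]
theorem stackMap_one (S : Stack Ω L) : stackMap 1 S = S :=
  List.map_id S

theorem stackMap_mul (a b : Equiv.Perm Ω) (S : Stack Ω L) :
    stackMap (a * b) S = stackMap a (stackMap b S) :=
  (List.map_map (f := LDigraph.map b) (g := LDigraph.map a)).symm

@[simp]
theorem stackMap_inv_stackMap (a : Equiv.Perm Ω) (S : Stack Ω L) :
    stackMap a⁻¹ (stackMap a S) = S := by
  rw [← stackMap_mul, inv_mul_cancel, stackMap_one]

@[simp]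
theorem stackMap_stackMap_inv (a : Equiv.Perm Ω) (S : Stack Ω L) :
    stackMap a (stackMap a⁻¹ S) = S := by
  rw [← stackMap_mul, mul_inv_cancel, stackMap_one]

theorem stackMap_injective (a : Equiv.Perm Ω) : Function.Injective (stackMap (L := L) a) :=
  Function.LeftInverse.injective (stackMap_inv_stackMap a)

end StackAction

section Refiner

variable {Ω L : Type*} {V : Set (Equiv.Perm Ω)} {fL fR : Stack Ω L → Stack Ω L}

theorem isRefiner_iff :
    IsRefiner V fL fR ↔ ∀ S, ∀ g ∈ V, stackMap g (fL S) = fR (stackMap g S) :=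
  ⟨fun h S g hg => h S _ g hg rfl, fun h S _ g hg hST => hST ▸ h S g hg⟩

theorem IsRefiner.eq_conj (h : IsRefiner V fL fR) {x : Equiv.Perm Ω} (hx : x ∈ V)
    (S : Stack Ω L) : fR S = stackMap x (fL (stackMap x⁻¹ S)) :=
  (h _ S x hx (stackMap_stackMap_inv x S)).symm

end Refiner

/-- The paper's coset `Gx = {g·x : g ∈ G}`, with `g·x` meaning "apply `g`, then `x`",
is `{x * g : g ∈ G}` in Mathlib's convention. -/
theorem stmt_8_general {Ω L : Type*} (G : Subgroup (Equiv.Perm Ω))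
    (x : Equiv.Perm Ω) (fL fR : Stack Ω L → Stack Ω L) :
    IsRefiner {v : Equiv.Perm Ω | ∃ g ∈ G, v = x * g} fL fR ↔
      (IsRefiner (G : Set (Equiv.Perm Ω)) fL fL ∧
        ∀ S : Stack Ω L, fR S = stackMap x (fL (stackMap x⁻¹ S))) := by
  constructor
  · intro h
    have hfR := h.eq_conj ⟨1, G.one_mem, (mul_one x).symm⟩
    refine ⟨isRefiner_iff.2 fun S g hg => stackMap_injective x ?_, hfR⟩
    have hxg := isRefiner_iff.1 h S (x * g) ⟨g, hg, rfl⟩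
    rwa [hfR, stackMap_mul, stackMap_mul, stackMap_inv_stackMap] at hxg
  · rintro ⟨hG, hfR⟩
    refine isRefiner_iff.2 ?_
    rintro S _ ⟨g, hg, rfl⟩
    rw [hfR, stackMap_mul, stackMap_mul, stackMap_inv_stackMap, isRefiner_iff.1 hG S g hg]

/-- `(fL, fR)` is a refiner for the right coset `Gx` iff `(fL, fL)` is a
refiner for the group `G` and `fR(S) = (fL(S^{x⁻¹}))^x` for all stacks `S`.
(The paper's coset `Gx = {g·x : g ∈ G}`, with `g·x` meaning "apply `g`, then `x`",
corresponds to `{x * g : g ∈ G}` in Mathlib's convention.) -/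
theorem stmt_8 {Ω L : Type*} [Fintype Ω] (G : Subgroup (Equiv.Perm Ω))
    (x : Equiv.Perm Ω) (fL fR : Stack Ω L → Stack Ω L) :
    IsRefiner {v : Equiv.Perm Ω | ∃ g ∈ G, v = x * g} fL fR ↔
      (IsRefiner (G : Set (Equiv.Perm Ω)) fL fL ∧
        ∀ S : Stack Ω L, fR S = stackMap x (fL (stackMap x⁻¹ S))) :=
  stmt_8_general G x fL fR
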